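/- arXiv:2511.20466 — 2 statements merged into one kernel-verified Lean document; each statement's English description precedes it below -/
import Mathlib

section
/- Let Θ ⊂ (0,1) × (0,∞) be compact and let θ₀ = (γ₀, σ₀) ∈ Θ. Let Z₁, Z₂, … be i.i.d. random variables on a probability space with distribution GPD(γ₀,σ₀), and for each k define the random functional J_k(θ) = ∫₀^∞ ( k⁻¹ Σ_{j=1}^k 1{Z_j > x} − S_θ(x) )² dx for θ ∈ Θ. Suppose (θ̂_k)_{k≥1} is a sequence of Θ-valued measurable estimators such that J_k(θ̂_k) ≤ J_k(θ₀) + ε_k where ε_k are nonnegative random variables converging to 0 in probability. Then θ̂_k converges to θ₀ in probability as k → ∞, and moreover for every fixed x ≥ 0 the random variable S_{θ̂_k}(x) converges in probability to S_{γ₀,σ₀}(x). -/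
open Real MeasureTheory Set Filter

noncomputable def gpdSurvival (γ σ x : ℝ) : ℝ := (1 + γ * x / σ) ^ (-1 / γ : ℝ)

noncomputable def gpdPdf (γ σ x : ℝ) : ℝ := σ⁻¹ * (1 + γ * x / σ) ^ (-1 / γ - 1 : ℝ)

noncomputable def gpdMeasure (γ σ : ℝ) : Measure ℝ :=
  (volume.restrict (Set.Ici (0 : ℝ))).withDensity fun x => ENNReal.ofReal (gpdPdf γ σ x)

/-!
The population criterion `D θ = ∫₀^∞ (S_θ - S_θ₀)²` is continuous on the compact set `Θ`
(dominated convergence, with the envelope `(1 + (a/d) x)^(-1/b)` built from a box `[a, b] × (0, d]`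
containing `Θ`, integrable because `b < 1`) and vanishes only at `θ₀`, because a GPD is determined
by its hazard rate `1 / (σ + γ x)`; hence `D` is bounded below away from `θ₀` on `Θ`.
Writing `F_k` for the empirical survival function, `(a - b)² ≤ 2 (c - a)² + 2 (c - b)²` with
`c = F_k` gives `D θ̂_k ≤ 2 J_k θ̂_k + 2 J_k θ₀ ≤ 4 J_k θ₀ + 2 ε_k`. Finally `F_k x` is an average
of `k` independent Bernoulli variables of mean `S_θ₀ x`, so `E J_k θ₀ = ∫ S_θ₀ (1 - S_θ₀) / k → 0`
and `J_k θ₀ → 0` in probability. The second claim follows from continuity of `θ ↦ S_θ x`.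
-/

open Topology ProbabilityTheory

section ConvergenceInMeasure

variable {α ι : Type*} [MeasurableSpace α] {μ : Measure α} {l : Filter ι}

lemma tendstoInMeasure_of_dist_ge_imp_le {E : Type*} [PseudoMetricSpace E] {f : ι → α → E}
    {g : α → E} {Y : ι → α → ℝ} (hY : TendstoInMeasure μ Y l 0)
    (h : ∀ r > 0, ∃ δ > 0, ∀ i a, r ≤ dist (f i a) (g a) → δ ≤ Y i a) :
    TendstoInMeasure μ f l g := by
  rw [tendstoInMeasure_iff_dist] at hY ⊢
  intro r hr
  obtain ⟨δ, hδ, hfY⟩ := h r hr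
  refine tendsto_of_tendsto_of_tendsto_of_le_of_le tendsto_const_nhds (hY δ hδ)
    (fun _ => zero_le) fun i => measure_mono fun a ha => ?_
  rw [mem_ofPred_eq, Pi.zero_apply, Real.dist_eq, sub_zero]
  exact (hfY i a ha).trans (le_abs_self _)

lemma MeasureTheory.TendstoInMeasure.add {E : Type*} [SeminormedAddCommGroup E]
    {f g : ι → α → E} {f' g' : α → E} (hf : TendstoInMeasure μ f l f')
    (hg : TendstoInMeasure μ g l g') :
    TendstoInMeasure μ (fun i a => f i a + g i a) l (fun a => f' a + g' a) := by
  rw [tendstoInMeasure_iff_norm] at hf hg ⊢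
  intro r hr
  have hsum := (hf (r / 2) (half_pos hr)).add (hg (r / 2) (half_pos hr))
  rw [add_zero] at hsum
  refine tendsto_of_tendsto_of_tendsto_of_le_of_le tendsto_const_nhds hsum
    (fun _ => zero_le) fun i => (measure_mono fun a ha => ?_).trans (measure_union_le _ _)
  by_contra hlt
  simp only [mem_union, mem_ofPred_eq, not_or, not_le] at ha hlt
  have := norm_add_le (f i a - f' a) (g i a - g' a)
  rw [add_sub_add_comm] at ha
  linarith

lemma MeasureTheory.TendstoInMeasure.const_mul {E : Type*} [SeminormedRing E]
    {f : ι → α → E} {g : α → E} (hf : TendstoInMeasure μ f l g) (c : E) :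
    TendstoInMeasure μ (fun i a => c * f i a) l (fun a => c * g a) := by
  rw [tendstoInMeasure_iff_norm] at hf ⊢
  intro r hr
  have hc : 0 < ‖c‖ + 1 := by positivity
  refine tendsto_of_tendsto_of_tendsto_of_le_of_le tendsto_const_nhds (hf _ (div_pos hr hc))
    (fun _ => zero_le) fun i => measure_mono fun a ha => ?_
  rw [mem_ofPred_eq, div_le_iff₀ hc]
  calc r ≤ ‖c * (f i a - g a)‖ := by rw [mul_sub]; exact ha
    _ ≤ ‖c‖ * ‖f i a - g a‖ := norm_mul_le _ _
    _ ≤ ‖f i a - g a‖ * (‖c‖ + 1) := by nlinarith [norm_nonneg (f i a - g a)]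

lemma MeasureTheory.TendstoInMeasure.comp_continuousAt {X Y : Type*} [PseudoMetricSpace X]
    [PseudoMetricSpace Y] {f : ι → α → X} {c : X} (hf : TendstoInMeasure μ f l fun _ => c)
    {φ : X → Y} (hφ : ContinuousAt φ c) :
    TendstoInMeasure μ (fun i a => φ (f i a)) l fun _ => φ c := by
  have hdist : TendstoInMeasure μ (fun i a => dist (f i a) c) l 0 :=
    tendstoInMeasure_iff_dist.2 fun r hr => by
      simpa [Real.dist_eq] using tendstoInMeasure_iff_dist.1 hf r hr
  refine tendstoInMeasure_of_dist_ge_imp_le hdist fun r hr => ?_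
  obtain ⟨δ, hδ, hφδ⟩ := Metric.continuousAt_iff.1 hφ r hr
  exact ⟨δ, hδ, fun i a ha => le_of_not_gt fun hlt => (hφδ hlt).not_ge ha⟩

lemma IsCompact.exists_pos_le_of_dist_ge {X : Type*} [MetricSpace X] {Θ : Set X}
    (hΘ : IsCompact Θ) {D : X → ℝ} (hD : ContinuousOn D Θ) {θ₀ : X}
    (hpos : ∀ θ ∈ Θ, θ ≠ θ₀ → 0 < D θ) {r : ℝ} (hr : 0 < r) :
    ∃ δ > 0, ∀ θ ∈ Θ, r ≤ dist θ θ₀ → δ ≤ D θ := by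
  set K := Θ ∩ {θ | r ≤ dist θ θ₀}
  rcases K.eq_empty_or_nonempty with hK | hK
  · exact ⟨1, one_pos, fun θ hθ hr => absurd (hK.subset ⟨hθ, hr⟩) id⟩
  have hKc : IsCompact K := hΘ.inter_right (isClosed_le continuous_const (continuous_id.dist
    continuous_const))
  obtain ⟨θm, ⟨hθmΘ, hθm⟩, hmin⟩ := hKc.exists_isMinOn hK (hD.mono inter_subset_left)
  refine ⟨D θm, hpos θm hθmΘ ?_, fun θ hθ hrθ => hmin ⟨hθ, hrθ⟩⟩
  rintro rfl
  simp only [mem_ofPred_eq, dist_self] at hθm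
  linarith

lemma tendstoInMeasure_of_criterion_le {X : Type*} [MetricSpace X] {Θ : Set X} (hΘ : IsCompact Θ)
    {D : X → ℝ} (hD : ContinuousOn D Θ) {θ₀ : X} (hpos : ∀ θ ∈ Θ, θ ≠ θ₀ → 0 < D θ)
    {θhat : ι → α → X} (hθhat : ∀ i a, θhat i a ∈ Θ) {Y : ι → α → ℝ}
    (hY : TendstoInMeasure μ Y l 0) (hle : ∀ i a, D (θhat i a) ≤ Y i a) :
    TendstoInMeasure μ θhat l fun _ => θ₀ := by
  refine tendstoInMeasure_of_dist_ge_imp_le hY fun r hr => ?_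
  obtain ⟨δ, hδ, hsep⟩ := hΘ.exists_pos_le_of_dist_ge hD hpos hr
  exact ⟨δ, hδ, fun i a ha => (hsep _ (hθhat i a) ha).trans (hle i a)⟩

end ConvergenceInMeasure

lemma sq_sub_le_add {u v : ℝ} (hu : u ∈ Icc (0 : ℝ) 1) (hv : v ∈ Icc (0 : ℝ) 1) :
    (u - v) ^ 2 ≤ u + v := by
  obtain ⟨hu0, hu1⟩ := hu
  obtain ⟨hv0, hv1⟩ := hv
  nlinarith

lemma integrable_sq_sub_of_mem_Icc {α : Type*} [MeasurableSpace α] {μ : Measure α} {f g : α → ℝ}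
    (hf : Integrable f μ) (hg : Integrable g μ) (hf01 : ∀ᵐ a ∂μ, f a ∈ Icc (0 : ℝ) 1)
    (hg01 : ∀ᵐ a ∂μ, g a ∈ Icc (0 : ℝ) 1) :
    Integrable (fun a => (f a - g a) ^ 2) μ := by
  refine (hf.add hg).mono' ((hf.1.sub hg.1).pow 2) ?_
  filter_upwards [hf01, hg01] with a hfa hga
  rw [norm_of_nonneg (sq_nonneg _)]
  exact sq_sub_le_add hfa hga

lemma integral_sq_sub_le {α : Type*} [MeasurableSpace α] {μ : Measure α} {f g h : α → ℝ}
    (hf : Integrable (fun a => (h a - f a) ^ 2) μ) (hg : Integrable (fun a => (h a - g a) ^ 2) μ) :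
    ∫ a, (f a - g a) ^ 2 ∂μ ≤ 2 * ∫ a, (h a - f a) ^ 2 ∂μ + 2 * ∫ a, (h a - g a) ^ 2 ∂μ := by
  rw [← integral_const_mul, ← integral_const_mul, ← integral_add (hf.const_mul 2) (hg.const_mul 2)]
  refine integral_mono_of_nonneg (ae_of_all _ fun a => sq_nonneg _)
    ((hf.const_mul 2).add (hg.const_mul 2)) (ae_of_all _ fun a => ?_)
  nlinarith [sq_nonneg (2 * h a - f a - g a)]

lemma integrableOn_one_add_mul_rpow_Ioi {c p : ℝ} (hc : 0 < c) (hp : p < -1) :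
    IntegrableOn (fun x => (1 + c * x) ^ p) (Ioi 0) := by
  have h := integrableOn_add_rpow_Ioi_of_lt (m := 1) hp (by norm_num : (-1 : ℝ) < 0)
  rw [← mul_zero c, ← integrableOn_Ioi_comp_mul_left_iff _ _ hc] at h
  simpa only [add_comm] using h

lemma variance_indicator_one {Ω : Type*} [MeasurableSpace Ω] {P : Measure Ω}
    [IsProbabilityMeasure P] {A : Set Ω} (hA : MeasurableSet A) :
    Var[A.indicator 1; P] = P.real A * (1 - P.real A) := by
  have hmem : MemLp (A.indicator (1 : Ω → ℝ)) 2 P := (memLp_const 1).indicator hA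
  have hsq : A.indicator (1 : Ω → ℝ) ^ 2 = A.indicator 1 := by
    ext ω
    by_cases h : ω ∈ A <;> simp [h]
  rw [variance_eq_sub hmem, hsq, integral_indicator_one hA]
  ring

section GPD

variable {γ σ x : ℝ}

lemma one_add_mul_div_pos (hγ : 0 < γ) (hσ : 0 < σ) (hx : 0 ≤ x) : 0 < 1 + γ * x / σ := by
  positivity

lemma gpdSurvival_pos (hγ : 0 < γ) (hσ : 0 < σ) (hx : 0 ≤ x) : 0 < gpdSurvival γ σ x :=
  rpow_pos_of_pos (one_add_mul_div_pos hγ hσ hx) _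

lemma gpdSurvival_le_one (hγ : 0 < γ) (hσ : 0 < σ) (hx : 0 ≤ x) : gpdSurvival γ σ x ≤ 1 :=
  rpow_le_one_of_one_le_of_nonpos (le_add_of_nonneg_right (by positivity))
    (by rw [neg_div]; exact neg_nonpos.2 (by positivity))

lemma hasDerivAt_gpdSurvival (hγ : 0 < γ) (hσ : 0 < σ) (hx : 0 ≤ x) :
    HasDerivAt (gpdSurvival γ σ) (-gpdPdf γ σ x) x := by
  have hb : HasDerivAt (fun t : ℝ => 1 + γ * t / σ) (γ / σ) x := by
    simpa using (((hasDerivAt_id x).const_mul γ).div_const σ).const_add 1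
  convert hb.rpow_const (p := -1 / γ) (Or.inl (one_add_mul_div_pos hγ hσ hx).ne') using 1
  · rfl
  unfold gpdPdf
  field_simp

lemma gpdPdf_eq_div (hγ : 0 < γ) (hσ : 0 < σ) (hx : 0 ≤ x) :
    gpdPdf γ σ x = gpdSurvival γ σ x / (σ + γ * x) := by
  unfold gpdPdf gpdSurvival
  rw [sub_eq_add_neg, rpow_add (one_add_mul_div_pos hγ hσ hx), rpow_neg_one]
  field_simp

lemma tendsto_gpdSurvival_atTop (hγ : 0 < γ) (hσ : 0 < σ) :
    Tendsto (gpdSurvival γ σ) atTop (𝓝 0) := by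
  have hb : Tendsto (fun t : ℝ => 1 + γ * t / σ) atTop atTop :=
    tendsto_atTop_add_const_left _ _
      ((tendsto_id.const_mul_atTop hγ).atTop_div_const hσ)
  refine ((tendsto_rpow_neg_atTop (y := 1 / γ) (by positivity)).comp hb).congr fun t => ?_
  simp only [Function.comp, gpdSurvival, neg_div]

lemma integrableOn_gpdPdf (hγ : 0 < γ) (hσ : 0 < σ) (hx : 0 ≤ x) :
    IntegrableOn (gpdPdf γ σ) (Ioi x) := by
  have h := integrableOn_one_add_mul_rpow_Ioi (div_pos hγ hσ)
    (show -1 / γ - 1 < -1 by rw [sub_lt_iff_lt_add, neg_add_cancel, neg_div]; simpa using hγ)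
  refine IntegrableOn.congr_fun ((h.mono_set (Ioi_subset_Ioi hx)).const_mul σ⁻¹)
    (fun t _ => ?_) measurableSet_Ioi
  simp only [gpdPdf, div_mul_eq_mul_div]

lemma integral_Ioi_gpdPdf (hγ : 0 < γ) (hσ : 0 < σ) (hx : 0 ≤ x) :
    ∫ t in Ioi x, gpdPdf γ σ t = gpdSurvival γ σ x := by
  have h := integral_Ioi_of_hasDerivAt_of_tendsto'
    (fun t ht => (hasDerivAt_gpdSurvival hγ hσ (hx.trans ht)).neg)
    ((integrableOn_gpdPdf hγ hσ hx).congr_fun (fun t _ => (neg_neg _).symm) measurableSet_Ioi)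
    (tendsto_gpdSurvival_atTop hγ hσ).neg
  simpa using h

lemma gpdMeasure_Ioi (hγ : 0 < γ) (hσ : 0 < σ) (hx : 0 ≤ x) :
    gpdMeasure γ σ (Ioi x) = ENNReal.ofReal (gpdSurvival γ σ x) := by
  rw [gpdMeasure, withDensity_apply _ measurableSet_Ioi,
    Measure.restrict_restrict measurableSet_Ioi, inter_eq_left.2 (Ioi_subset_Ici hx), ← integral_Ioi_gpdPdf hγ hσ hx,
    ofReal_integral_eq_lintegral_ofReal (integrableOn_gpdPdf hγ hσ hx)]
  filter_upwards [ae_restrict_mem measurableSet_Ioi] with t ht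
  have ht0 : 0 ≤ t := hx.trans ht.le
  rw [gpdPdf_eq_div hγ hσ ht0]
  have := gpdSurvival_pos hγ hσ ht0
  positivity

lemma integrableOn_gpdSurvival (hγ : 0 < γ) (hγ1 : γ < 1) (hσ : 0 < σ) :
    IntegrableOn (gpdSurvival γ σ) (Ioi 0) := by
  have h := integrableOn_one_add_mul_rpow_Ioi (div_pos hγ hσ)
    (show -1 / γ < -1 by rw [div_lt_iff₀ hγ]; linarith)
  refine h.congr_fun (fun t _ => ?_) measurableSet_Ioi
  simp only [gpdSurvival, div_mul_eq_mul_div]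

lemma continuousAt_gpdSurvival (hγ : 0 < γ) (hσ : 0 < σ) (hx : 0 ≤ x) :
    ContinuousAt (gpdSurvival γ σ) x := by
  have hb : ContinuousAt (fun t : ℝ => 1 + γ * t / σ) x := by fun_prop
  exact hb.rpow_const (Or.inl (one_add_mul_div_pos hγ hσ hx).ne')

lemma continuousAt_gpdSurvival_param {θ : ℝ × ℝ} (hθ : θ ∈ Ioi 0 ×ˢ Ioi 0) (hx : 0 ≤ x) :
    ContinuousAt (fun θ : ℝ × ℝ => gpdSurvival θ.1 θ.2 x) θ := by
  have hb : ContinuousAt (fun θ : ℝ × ℝ => 1 + θ.1 * x / θ.2) θ :=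
    continuousAt_const.add ((continuousAt_fst.mul continuousAt_const).div continuousAt_snd
      (ne_of_gt hθ.2))
  exact hb.rpow (continuousAt_const.div continuousAt_fst (ne_of_gt hθ.1))
    (Or.inl (one_add_mul_div_pos hθ.1 hθ.2 hx).ne')

lemma gpdSurvival_injective {γ' σ' : ℝ} (hγ : 0 < γ) (hσ : 0 < σ) (hγ' : 0 < γ')
    (hσ' : 0 < σ') (h : EqOn (gpdSurvival γ σ) (gpdSurvival γ' σ') (Ioi 0)) :
    γ = γ' ∧ σ = σ' := by
  -- equal survival functions have equal hazard rates `1 / (σ + γ x)`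
  have hlin : ∀ x > 0, σ + γ * x = σ' + γ' * x := by
    intro x hx
    have hpdf : gpdPdf γ σ x = gpdPdf γ' σ' x := by
      have hev : gpdSurvival γ σ =ᶠ[𝓝 x] gpdSurvival γ' σ' :=
        eventually_of_mem (Ioi_mem_nhds hx) h
      exact neg_injective <| (hasDerivAt_gpdSurvival hγ hσ hx.le).unique <|
        hev.hasDerivAt_iff.2 (hasDerivAt_gpdSurvival hγ' hσ' hx.le)
    rw [gpdPdf_eq_div hγ hσ hx.le, gpdPdf_eq_div hγ' hσ' hx.le, h hx, div_eq_mul_inv,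
      div_eq_mul_inv] at hpdf
    exact inv_inj.1 (mul_left_cancel₀ (gpdSurvival_pos hγ' hσ' hx.le).ne' hpdf)
  have h1 := hlin 1 one_pos
  have h2 := hlin 2 two_pos
  constructor <;> linarith

lemma gpdSurvival_le_of_le {a b d : ℝ} (ha : 0 < a) (hγa : a ≤ γ) (hγb : γ ≤ b) (hσ : 0 < σ)
    (hσd : σ ≤ d) (hx : 0 ≤ x) :
    gpdSurvival γ σ x ≤ (1 + a / d * x) ^ (-1 / b) := by
  have hγ : 0 < γ := ha.trans_le hγa
  have hbase : 1 + a / d * x ≤ 1 + γ * x / σ := by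
    rw [mul_div_right_comm]
    gcongr
  have hb1 : 1 ≤ 1 + a / d * x := le_add_of_nonneg_right (by positivity [hσ.trans_le hσd])
  calc gpdSurvival γ σ x ≤ (1 + γ * x / σ) ^ (-1 / b) := by
        refine rpow_le_rpow_of_exponent_le (hb1.trans hbase) ?_
        simp only [neg_div]
        exact neg_le_neg (one_div_le_one_div_of_le hγ hγb)
    _ ≤ (1 + a / d * x) ^ (-1 / b) :=
        rpow_le_rpow_of_nonpos (by linarith) hbase (by rw [neg_div]; exact neg_nonpos.2 (by
          have := hγ.trans_le hγb; positivity))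

lemma exists_integrableOn_forall_gpdSurvival_le {Θ : Set (ℝ × ℝ)} (hΘ : IsCompact Θ)
    (hΘsub : Θ ⊆ Ioo 0 1 ×ˢ Ioi 0) :
    ∃ B : ℝ → ℝ, IntegrableOn B (Ioi 0) ∧
      ∀ θ ∈ Θ, ∀ x, 0 ≤ x → gpdSurvival θ.1 θ.2 x ≤ B x := by
  rcases Θ.eq_empty_or_nonempty with rfl | hne
  · exact ⟨0, integrableOn_zero, by simp⟩
  obtain ⟨θa, haΘ, ha⟩ := hΘ.exists_isMinOn hne continuous_fst.continuousOn
  obtain ⟨θb, hbΘ, hb⟩ := hΘ.exists_isMaxOn hne continuous_fst.continuousOn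
  obtain ⟨θd, hdΘ, hd⟩ := hΘ.exists_isMaxOn hne continuous_snd.continuousOn
  have hb1 : -1 / θb.1 < -1 := by
    rw [div_lt_iff₀ (hΘsub hbΘ).1.1]
    linarith [(hΘsub hbΘ).1.2]
  refine ⟨_, integrableOn_one_add_mul_rpow_Ioi (div_pos (hΘsub haΘ).1.1 (hΘsub hdΘ).2) hb1,
    fun θ hθ x hx => gpdSurvival_le_of_le (hΘsub haΘ).1.1 (ha hθ) (hb hθ) (hΘsub hθ).2 (hd hθ) hx⟩

lemma gpdSurvival_mem_Icc (hγ : 0 < γ) (hσ : 0 < σ) (hx : 0 ≤ x) :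
    gpdSurvival γ σ x ∈ Icc (0 : ℝ) 1 :=
  ⟨(gpdSurvival_pos hγ hσ hx).le, gpdSurvival_le_one hγ hσ hx⟩

end GPD

noncomputable def gpdDistSq (θ θ' : ℝ × ℝ) : ℝ :=
  ∫ x in Ioi 0, (gpdSurvival θ.1 θ.2 x - gpdSurvival θ'.1 θ'.2 x) ^ 2

lemma integrableOn_sq_gpdSurvival_sub {θ θ' : ℝ × ℝ} (hθ : θ ∈ Ioo 0 1 ×ˢ Ioi 0)
    (hθ' : θ' ∈ Ioo 0 1 ×ˢ Ioi 0) :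
    IntegrableOn (fun x => (gpdSurvival θ.1 θ.2 x - gpdSurvival θ'.1 θ'.2 x) ^ 2) (Ioi 0) := by
  refine integrable_sq_sub_of_mem_Icc (integrableOn_gpdSurvival hθ.1.1 hθ.1.2 hθ.2)
    (integrableOn_gpdSurvival hθ'.1.1 hθ'.1.2 hθ'.2) ?_ ?_ <;>
  filter_upwards [ae_restrict_mem measurableSet_Ioi] with x hx
  exacts [gpdSurvival_mem_Icc hθ.1.1 hθ.2 hx.le, gpdSurvival_mem_Icc hθ'.1.1 hθ'.2 hx.le]

lemma gpdDistSq_pos {θ θ' : ℝ × ℝ} (hθ : θ ∈ Ioo 0 1 ×ˢ Ioi 0) (hθ' : θ' ∈ Ioo 0 1 ×ˢ Ioi 0)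
    (hne : θ ≠ θ') : 0 < gpdDistSq θ θ' := by
  set f := fun x => (gpdSurvival θ.1 θ.2 x - gpdSurvival θ'.1 θ'.2 x) ^ 2
  obtain ⟨x₀, hx₀, hfx₀⟩ : ∃ x₀ ∈ Ioi (0 : ℝ), f x₀ ≠ 0 := by
    by_contra! h
    obtain ⟨h1, h2⟩ := gpdSurvival_injective hθ.1.1 hθ.2 hθ'.1.1 hθ'.2
      fun x hx => sub_eq_zero.1 (pow_eq_zero_iff two_ne_zero |>.1 (h x hx))
    exact hne (Prod.ext h1 h2)
  have hcont : ContinuousOn f (Ioi 0) := continuousOn_of_forall_continuousAt fun x hx =>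
    ((continuousAt_gpdSurvival hθ.1.1 hθ.2 (le_of_lt hx)).sub
      (continuousAt_gpdSurvival hθ'.1.1 hθ'.2 (le_of_lt hx))).pow 2
  have hopen : IsOpen (Ioi 0 ∩ f ⁻¹' {0}ᶜ) :=
    hcont.isOpen_inter_preimage isOpen_Ioi isOpen_compl_singleton
  rw [gpdDistSq, setIntegral_pos_iff_support_of_nonneg_ae (ae_of_all _ fun x => sq_nonneg _)
    (integrableOn_sq_gpdSurvival_sub hθ hθ'), Function.support_eq_preimage, inter_comm]
  exact hopen.measure_pos _ ⟨x₀, hx₀, hfx₀⟩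

lemma continuousOn_gpdDistSq {Θ : Set (ℝ × ℝ)} (hΘ : IsCompact Θ) (hΘsub : Θ ⊆ Ioo 0 1 ×ˢ Ioi 0)
    {θ₀ : ℝ × ℝ} (hθ₀ : θ₀ ∈ Ioo 0 1 ×ˢ Ioi 0) :
    ContinuousOn (fun θ => gpdDistSq θ θ₀) Θ := by
  obtain ⟨B, hB, hSB⟩ := exists_integrableOn_forall_gpdSurvival_le hΘ hΘsub
  refine continuousOn_of_dominated
    (fun θ hθ => (integrableOn_sq_gpdSurvival_sub (hΘsub hθ) hθ₀).1)
    (bound := fun x => B x + gpdSurvival θ₀.1 θ₀.2 x) (fun θ hθ => ?_)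
    (hB.add (integrableOn_gpdSurvival hθ₀.1.1 hθ₀.1.2 hθ₀.2)) ?_ <;>
  filter_upwards [ae_restrict_mem measurableSet_Ioi] with x hx
  · have hS := gpdSurvival_mem_Icc (hΘsub hθ).1.1 (hΘsub hθ).2 hx.le
    rw [norm_of_nonneg (sq_nonneg _)]
    linarith [sq_sub_le_add hS (gpdSurvival_mem_Icc hθ₀.1.1 hθ₀.2 hx.le), hSB θ hθ x hx.le]
  · exact continuousOn_of_forall_continuousAt fun θ hθ =>
      ((continuousAt_gpdSurvival_param ⟨(hΘsub hθ).1.1, (hΘsub hθ).2⟩ hx.le).sub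
        continuousAt_const).pow 2

noncomputable def empiricalSurvival (z : ℕ → ℝ) (k : ℕ) (x : ℝ) : ℝ :=
  (k : ℝ)⁻¹ * ∑ j ∈ Finset.range k, if x < z j then 1 else 0

lemma empiricalSurvival_mem_Icc (z : ℕ → ℝ) (k : ℕ) (x : ℝ) :
    empiricalSurvival z k x ∈ Icc (0 : ℝ) 1 := by
  have h01 : ∀ j, (if x < z j then (1 : ℝ) else 0) ∈ Icc (0 : ℝ) 1 := fun j => by
    split_ifs <;> norm_num
  refine ⟨mul_nonneg (by positivity) (Finset.sum_nonneg fun j _ => (h01 j).1),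
    inv_mul_le_one_of_le₀ ?_ (Nat.cast_nonneg k)⟩
  simpa using Finset.sum_le_sum fun j (_ : j ∈ Finset.range k) => (h01 j).2

lemma Measurable.empiricalSurvival {α : Type*} [MeasurableSpace α] {Z : ℕ → α → ℝ} {X : α → ℝ}
    (hZ : ∀ j, Measurable (Z j)) (hX : Measurable X) (k : ℕ) :
    Measurable fun a => empiricalSurvival (fun j => Z j a) k (X a) :=
  (Finset.measurable_sum _ fun j _ =>
    Measurable.ite (measurableSet_lt hX (hZ j)) measurable_const measurable_const).const_mul _

lemma integrableOn_empiricalSurvival (z : ℕ → ℝ) (k : ℕ) :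
    IntegrableOn (empiricalSurvival z k) (Ioi 0) := by
  have hterm : ∀ c : ℝ, IntegrableOn (fun x => if x < c then (1 : ℝ) else 0) (Ioi 0) := by
    intro c
    have hind : (fun x => if x < c then (1 : ℝ) else 0) = (Iio c).indicator 1 := by
      ext x
      simp [indicator_apply]
    rw [hind, ← integrable_indicator_iff measurableSet_Ioi, indicator_indicator, Ioi_inter_Iio,
      integrable_indicator_iff measurableSet_Ioo]
    exact integrableOn_const measure_Ioo_lt_top.ne
  exact (integrable_finsetSum _ fun j _ => hterm (z j)).const_mul _

lemma gpdDistSq_le_empirical (z : ℕ → ℝ) (k : ℕ) {θ θ' : ℝ × ℝ} (hθ : θ ∈ Ioo 0 1 ×ˢ Ioi 0)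
    (hθ' : θ' ∈ Ioo 0 1 ×ˢ Ioi 0) :
    gpdDistSq θ θ' ≤ 2 * (∫ x in Ioi 0, (empiricalSurvival z k x - gpdSurvival θ.1 θ.2 x) ^ 2) +
      2 * ∫ x in Ioi 0, (empiricalSurvival z k x - gpdSurvival θ'.1 θ'.2 x) ^ 2 := by
  have hint : ∀ θ ∈ Ioo (0 : ℝ) 1 ×ˢ Ioi 0, IntegrableOn
      (fun x => (empiricalSurvival z k x - gpdSurvival θ.1 θ.2 x) ^ 2) (Ioi 0) := fun θ hθ =>
    integrable_sq_sub_of_mem_Icc (integrableOn_empiricalSurvival z k)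
      (integrableOn_gpdSurvival hθ.1.1 hθ.1.2 hθ.2) (ae_of_all _ (empiricalSurvival_mem_Icc z k))
      (by filter_upwards [ae_restrict_mem measurableSet_Ioi] with x hx
          exact gpdSurvival_mem_Icc hθ.1.1 hθ.2 hx.le)
  rw [gpdDistSq]
  exact integral_sq_sub_le (hint θ hθ) (hint θ' hθ')

lemma empiricalSurvival_eq_sum_indicator {Ω : Type*} (Z : ℕ → Ω → ℝ) (k : ℕ) (x : ℝ) (ω : Ω) :
    empiricalSurvival (fun j => Z j ω) k x =
      (k : ℝ)⁻¹ * (∑ j ∈ Finset.range k, {ω | x < Z j ω}.indicator 1) ω := by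
  simp [empiricalSurvival, Set.indicator_apply]

section EmpiricalSurvival

variable {Ω : Type*} [MeasurableSpace Ω] {P : Measure Ω} [IsProbabilityMeasure P]
  {Z : ℕ → Ω → ℝ}

lemma integral_sq_empiricalSurvival_sub (hZ : ∀ j, Measurable (Z j)) (hindep : iIndepFun Z P)
    {x s : ℝ} (hs : ∀ j, P.real {ω | x < Z j ω} = s) {k : ℕ} (hk : 0 < k) :
    ∫ ω, (empiricalSurvival (fun j => Z j ω) k x - s) ^ 2 ∂P = s * (1 - s) / k := by
  set B : ℕ → Ω → ℝ := fun j => {ω | x < Z j ω}.indicator 1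
  have hBmeas : ∀ j, MeasurableSet {ω | x < Z j ω} := fun j =>
    measurableSet_lt measurable_const (hZ j)
  have hBmem : ∀ j, MemLp (B j) 2 P := fun j => (memLp_const 1).indicator (hBmeas j)
  have hBindep : Set.Pairwise ↑(Finset.range k) fun i j => B i ⟂ᵢ[P] B j := fun i _ j _ hij =>
    (hindep.indepFun hij).comp (measurable_const.indicator (measurableSet_Ioi (a := x)))
      (measurable_const.indicator measurableSet_Ioi)
  have hmean : P[fun ω => (k : ℝ)⁻¹ * (∑ j ∈ Finset.range k, B j) ω] = s := by
    simp only [Finset.sum_apply]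
    rw [integral_const_mul, integral_finsetSum _ fun j _ => (hBmem j).integrable one_le_two]
    simp [B, integral_indicator_one (hBmeas _), hs]
    field_simp
  have hvar := variance_eq_integral
    (((memLp_finsetSum' (Finset.range k) fun j _ => hBmem j).const_mul (k : ℝ)⁻¹).aemeasurable)
  rw [hmean] at hvar
  simp_rw [empiricalSurvival_eq_sum_indicator]
  rw [← hvar, variance_const_mul, IndepFun.variance_sum (fun j _ => hBmem j) hBindep]
  simp [B, variance_indicator_one (hBmeas _), hs]
  field_simp

lemma lintegral_lintegral_sq_empiricalSurvival_sub_le (hZ : ∀ j, Measurable (Z j))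
    (hindep : iIndepFun Z P) {S : ℝ → ℝ} (hS : IntegrableOn S (Ioi 0))
    (hPS : ∀ j, ∀ x > 0, P.real {ω | x < Z j ω} = S x) {k : ℕ} (hk : 0 < k) :
    ∫⁻ ω, (∫⁻ x in Ioi 0, ‖(empiricalSurvival (fun j => Z j ω) k x - S x) ^ 2‖ₑ) ∂P ≤
      ENNReal.ofReal ((∫ x in Ioi 0, S x) / k) := by
  have hS01 : ∀ x > 0, S x ∈ Icc (0 : ℝ) 1 := fun x hx =>
    hPS 0 x hx ▸ ⟨measureReal_nonneg, measureReal_le_one⟩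
  have hmeas : Measurable fun p : Ω × ℝ => empiricalSurvival (fun j => Z j p.1) k p.2 :=
    .empiricalSurvival (fun j => (hZ j).comp measurable_fst) measurable_snd k
  have hSk : 0 ≤ᵐ[volume.restrict (Ioi 0)] fun x => S x / k := by
    filter_upwards [ae_restrict_mem measurableSet_Ioi] with x hx
    exact div_nonneg (hS01 x hx).1 (Nat.cast_nonneg k)
  have hq : AEMeasurable (Function.uncurry fun ω x =>
      ‖(empiricalSurvival (fun j => Z j ω) k x - S x) ^ 2‖ₑ) (P.prod (volume.restrict (Ioi 0))) :=
    ((hmeas.aemeasurable.sub hS.aemeasurable.comp_snd).pow_const 2).enorm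
  rw [lintegral_lintegral_swap hq, ← integral_div,
    ofReal_integral_eq_lintegral_ofReal (hS.div_const _) hSk]
  refine setLIntegral_mono' measurableSet_Ioi fun x hx => ?_
  have hint : Integrable (fun ω => (empiricalSurvival (fun j => Z j ω) k x - S x) ^ 2) P := by
    refine .of_bound ?_ 2 (ae_of_all _ fun ω => ?_)
    · exact (((Measurable.empiricalSurvival hZ measurable_const k).sub measurable_const).pow_const
        2).aestronglyMeasurable
    · rw [norm_of_nonneg (sq_nonneg _)]
      linarith [sq_sub_le_add (empiricalSurvival_mem_Icc (fun j => Z j ω) k x) (hS01 x hx),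
        (empiricalSurvival_mem_Icc (fun j => Z j ω) k x).2, (hS01 x hx).2]
  rw [← ofReal_integral_norm_eq_lintegral_enorm hint]
  simp only [norm_of_nonneg (sq_nonneg _)]
  rw [integral_sq_empiricalSurvival_sub hZ hindep (fun j => hPS j x hx) hk]
  gcongr
  exact mul_le_of_le_one_right (hS01 x hx).1 (by linarith [(hS01 x hx).1])

lemma tendstoInMeasure_integral_sq_empiricalSurvival_sub (hZ : ∀ j, Measurable (Z j))
    (hindep : iIndepFun Z P) {S : ℝ → ℝ} (hS : IntegrableOn S (Ioi 0))
    (hPS : ∀ j, ∀ x > 0, P.real {ω | x < Z j ω} = S x) :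
    TendstoInMeasure P
      (fun k ω => ∫ x in Ioi 0, (empiricalSurvival (fun j => Z j ω) k x - S x) ^ 2) atTop 0 := by
  have hq : ∀ k, AEStronglyMeasurable
      (fun p : Ω × ℝ => (empiricalSurvival (fun j => Z j p.1) k p.2 - S p.2) ^ 2)
      (P.prod (volume.restrict (Ioi 0))) :=
    fun k => ((Measurable.empiricalSurvival (fun j => (hZ j).comp measurable_fst) measurable_snd
      k).aemeasurable.sub hS.aemeasurable.comp_snd).pow_const 2 |>.aestronglyMeasurable
  refine tendstoInMeasure_of_tendsto_eLpNorm one_ne_zero (fun k => (hq k).integral_prod_right')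
    aestronglyMeasurable_const ?_
  have hlim : Tendsto (fun k : ℕ => ENNReal.ofReal ((∫ x in Ioi 0, S x) / k)) atTop (𝓝 0) := by
    simpa using ENNReal.tendsto_ofReal (tendsto_const_div_atTop_nhds_zero_nat _)
  refine tendsto_of_tendsto_of_tendsto_of_le_of_le' tendsto_const_nhds hlim
    (.of_forall fun k => zero_le) ?_
  filter_upwards [eventually_gt_atTop 0] with k hk
  rw [eLpNorm_one_eq_lintegral_enorm]
  refine (lintegral_mono fun ω => ?_).trans
    (lintegral_lintegral_sq_empiricalSurvival_sub_le hZ hindep hS hPS hk)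
  rw [Pi.sub_apply, Pi.zero_apply, sub_zero]
  exact enorm_integral_le_lintegral_enorm _

end EmpiricalSurvival

theorem mde_consistency_general {Ω : Type*} [MeasurableSpace Ω] (P : Measure Ω) [IsProbabilityMeasure P]
    (Θ : Set (ℝ × ℝ)) (hΘsub : Θ ⊆ Set.Ioo (0 : ℝ) 1 ×ˢ Set.Ioi (0 : ℝ)) (hΘcomp : IsCompact Θ)
    (θ₀ : ℝ × ℝ) (hθ₀ : θ₀ ∈ Θ)
    (Z : ℕ → Ω → ℝ) (hZmeas : ∀ i, Measurable (Z i))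
    (hZindep : ProbabilityTheory.iIndepFun Z P)
    (hZdist : ∀ i, Measure.map (Z i) P = gpdMeasure θ₀.1 θ₀.2)
    (J : ℕ → (ℝ × ℝ) → Ω → ℝ)
    (hJ : ∀ k θ ω, J k θ ω = ∫ x in Set.Ioi (0 : ℝ),
      ((k : ℝ)⁻¹ * ∑ j ∈ Finset.range k, (if x < Z j ω then (1 : ℝ) else 0)
        - gpdSurvival θ.1 θ.2 x) ^ 2)
    (θhat : ℕ → Ω → ℝ × ℝ)
    (hθhatΘ : ∀ k ω, θhat k ω ∈ Θ)
    (ε : ℕ → Ω → ℝ)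
    (hεto0 : TendstoInMeasure P ε atTop (fun _ => (0 : ℝ)))
    (hnearmin : ∀ k ω, J k (θhat k ω) ω ≤ J k θ₀ ω + ε k ω) :
    TendstoInMeasure P (fun k ω => θhat k ω) atTop (fun _ => θ₀) ∧
    ∀ x : ℝ, 0 ≤ x →
      TendstoInMeasure P (fun k ω => gpdSurvival (θhat k ω).1 (θhat k ω).2 x) atTop
        (fun _ => gpdSurvival θ₀.1 θ₀.2 x) := by
  have hθ₀' := hΘsub hθ₀
  have hJ' : ∀ k θ ω, J k θ ω =
      ∫ x in Ioi 0, (empiricalSurvival (fun j => Z j ω) k x - gpdSurvival θ.1 θ.2 x) ^ 2 := hJ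
  have hPS : ∀ j, ∀ x > 0, P.real {ω | x < Z j ω} = gpdSurvival θ₀.1 θ₀.2 x := fun j x hx => by
    change (P (Z j ⁻¹' Ioi x)).toReal = _
    rw [← Measure.map_apply (hZmeas j) measurableSet_Ioi,
      hZdist j, gpdMeasure_Ioi hθ₀'.1.1 hθ₀'.2 hx.le,
      ENNReal.toReal_ofReal (gpdSurvival_pos hθ₀'.1.1 hθ₀'.2 hx.le).le]
  have hJ₀ : TendstoInMeasure P (fun k => J k θ₀) atTop 0 :=
    (tendstoInMeasure_integral_sq_empiricalSurvival_sub hZmeas hZindep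
      (integrableOn_gpdSurvival hθ₀'.1.1 hθ₀'.1.2 hθ₀'.2) hPS).congr_left
      fun k => ae_of_all _ fun ω => (hJ' k θ₀ ω).symm
  have hY : TendstoInMeasure P (fun k ω => 4 * J k θ₀ ω + 2 * ε k ω) atTop 0 := by
    have := (hJ₀.const_mul 4).add (hεto0.const_mul 2)
    simp only [Pi.zero_apply, mul_zero, add_zero] at this
    exact this
  have hle : ∀ k ω, gpdDistSq (θhat k ω) θ₀ ≤ 4 * J k θ₀ ω + 2 * ε k ω := fun k ω => by
    have := hnearmin k ω
    simp only [hJ'] at this ⊢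
    linarith [gpdDistSq_le_empirical (fun j => Z j ω) k (hΘsub (hθhatΘ k ω)) hθ₀']
  have hθhat := tendstoInMeasure_of_criterion_le hΘcomp (continuousOn_gpdDistSq hΘcomp hΘsub hθ₀')
    (fun θ hθ hne => gpdDistSq_pos (hΘsub hθ) hθ₀' hne) hθhatΘ hY hle
  exact ⟨hθhat, fun x hx =>
    hθhat.comp_continuousAt (continuousAt_gpdSurvival_param ⟨hθ₀'.1.1, hθ₀'.2⟩ hx)⟩

/-- consistency of near-minimizers of the empirical `L²`-distance criterion:
any sequence of Θ-valued estimators whose criterion value is within `o_P(1)` of the value at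
the true parameter `θ₀` converges to `θ₀` in probability, and the corresponding plug-in
survival function estimates converge in probability pointwise. -/
theorem mde_consistency {Ω : Type*} [MeasurableSpace Ω] (P : Measure Ω) [IsProbabilityMeasure P]
    (Θ : Set (ℝ × ℝ)) (hΘsub : Θ ⊆ Set.Ioo (0 : ℝ) 1 ×ˢ Set.Ioi (0 : ℝ)) (hΘcomp : IsCompact Θ)
    (θ₀ : ℝ × ℝ) (hθ₀ : θ₀ ∈ Θ)
    (Z : ℕ → Ω → ℝ) (hZmeas : ∀ i, Measurable (Z i))
    (hZindep : ProbabilityTheory.iIndepFun Z P)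
    (hZdist : ∀ i, Measure.map (Z i) P = gpdMeasure θ₀.1 θ₀.2)
    (J : ℕ → (ℝ × ℝ) → Ω → ℝ)
    (hJ : ∀ k θ ω, J k θ ω = ∫ x in Set.Ioi (0 : ℝ),
      ((k : ℝ)⁻¹ * ∑ j ∈ Finset.range k, (if x < Z j ω then (1 : ℝ) else 0)
        - gpdSurvival θ.1 θ.2 x) ^ 2)
    (θhat : ℕ → Ω → ℝ × ℝ) (hθhatMeas : ∀ k, Measurable (θhat k))
    (hθhatΘ : ∀ k ω, θhat k ω ∈ Θ)
    (ε : ℕ → Ω → ℝ) (hεnonneg : ∀ k ω, 0 ≤ ε k ω)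
    (hεto0 : TendstoInMeasure P ε atTop (fun _ => (0 : ℝ)))
    (hnearmin : ∀ k ω, J k (θhat k ω) ω ≤ J k θ₀ ω + ε k ω) :
    TendstoInMeasure P (fun k ω => θhat k ω) atTop (fun _ => θ₀) ∧
    ∀ x : ℝ, 0 ≤ x →
      TendstoInMeasure P (fun k ω => gpdSurvival (θhat k ω).1 (θhat k ω).2 x) atTop
        (fun _ => gpdSurvival θ₀.1 θ₀.2 x) :=
  mde_consistency_general P Θ hΘsub hΘcomp θ₀ hθ₀ Z hZmeas hZindep hZdist J hJ θhat hθhatΘ ε hεto0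
    hnearmin
end

section
/- For every γ ∈ (0,1) and σ > 0, ∫₀^∞ ( ∫₀^u D_σ(y) dy ) f_{γ,σ}(u) du = 1 / ( 2(γ−2) ), where D_σ(y) = −(y/σ²)(1 + γy/σ)^{−1/γ − 1} is the partial derivative of F_{γ,σ}(y) with respect to σ. -/
/-!
With `t = 1 + γ u / σ`, the inner integral `G(u) = ∫₀^u D_σ` and an antiderivative `H` of
`G · f_{γ,σ}` are explicit combinations of powers of `t` (`dsigmaPrimitive`, `dsigmaPdfPrimitive`).
All powers of `t` occurring in `H` are negative since `γ < 1`, so `H → 0` at infinity. As `D_σ ≤ 0`,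
the integrand is nonpositive, so the improper fundamental theorem of calculus applies and the
integral equals `-H(0) = 1 / (2 (γ - 2))`.
-/

open Real MeasureTheory

/-- Partial derivative of the GPD cdf `F_{γ,σ}(y)` with respect to the scale parameter σ. -/
noncomputable def Dsigma (γ σ y : ℝ) : ℝ :=
  -(y / σ ^ 2) * (1 + γ * y / σ) ^ (-1 / γ - 1 : ℝ)

open Filter Topology Set

noncomputable def dsigmaPrimitive (γ σ u : ℝ) : ℝ :=
  (1 + γ * u / σ) ^ (1 - 1 / γ) / (γ * (1 - γ)) - (1 + γ * u / σ) ^ (-1 / γ) / γ - 1 / (1 - γ)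

noncomputable def dsigmaPdfPrimitive (γ σ u : ℝ) : ℝ :=
  (1 + γ * u / σ) ^ (1 - 2 / γ) / (γ * (1 - γ) * (γ - 2)) + (1 + γ * u / σ) ^ (-2 / γ) / (2 * γ)
    + (1 + γ * u / σ) ^ (-1 / γ) / (1 - γ)

lemma hasDerivAt_one_add_mul_div_rpow (γ σ p : ℝ) {x : ℝ} (hx : 0 < 1 + γ * x / σ) :
    HasDerivAt (fun u => (1 + γ * u / σ) ^ p) (p * γ / σ * (1 + γ * x / σ) ^ (p - 1)) x := by
  have h : HasDerivAt (fun u : ℝ => 1 + γ * u / σ) (γ / σ) x := by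
    simpa using (((hasDerivAt_id x).const_mul γ).div_const σ).const_add 1
  convert h.rpow_const (p := p) (Or.inl hx.ne') using 1
  ring

lemma tendsto_one_add_mul_div_rpow_atTop {γ σ p : ℝ} (hγ : 0 < γ) (hσ : 0 < σ) (hp : p < 0) :
    Tendsto (fun u => (1 + γ * u / σ) ^ p) atTop (𝓝 0) := by
  have h : Tendsto (fun u : ℝ => 1 + γ * u / σ) atTop atTop :=
    tendsto_atTop_add_const_left _ _ ((tendsto_id.const_mul_atTop hγ).atTop_div_const hσ)
  simpa [Function.comp_def] using (tendsto_rpow_neg_atTop (neg_pos.2 hp)).comp h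

section

variable {γ σ : ℝ}

lemma dsigmaPrimitive_zero (hγ0 : γ ≠ 0) (hγ1 : γ ≠ 1) : dsigmaPrimitive γ σ 0 = 0 := by
  simp only [dsigmaPrimitive, mul_zero, zero_div, add_zero, one_rpow]
  field_simp
  ring

lemma dsigmaPdfPrimitive_zero (hγ0 : γ ≠ 0) (hγ1 : γ ≠ 1) (hγ2 : γ ≠ 2) :
    dsigmaPdfPrimitive γ σ 0 = -1 / (2 * (γ - 2)) := by
  simp only [dsigmaPdfPrimitive, mul_zero, zero_div, add_zero, one_rpow]
  field_simp
  ring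

lemma hasDerivAt_dsigmaPrimitive (hγ0 : γ ≠ 0) (hγ1 : γ ≠ 1) {x : ℝ}
    (hx : 0 < 1 + γ * x / σ) : HasDerivAt (dsigmaPrimitive γ σ) (Dsigma γ σ x) x := by
  refine ((((hasDerivAt_one_add_mul_div_rpow γ σ (1 - 1 / γ) hx).div_const (γ * (1 - γ))).sub
    ((hasDerivAt_one_add_mul_div_rpow γ σ (-1 / γ) hx).div_const γ)).sub_const
      (1 / (1 - γ))).congr_deriv ?_
  rw [Dsigma, show (1 - 1 / γ - 1 : ℝ) = -1 / γ - 1 + 1 by ring, rpow_add_one hx.ne']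
  field_simp
  ring

lemma hasDerivAt_dsigmaPdfPrimitive (hγ0 : γ ≠ 0) (hγ2 : γ ≠ 2) {x : ℝ}
    (hx : 0 < 1 + γ * x / σ) :
    HasDerivAt (dsigmaPdfPrimitive γ σ) (dsigmaPrimitive γ σ x * gpdPdf γ σ x) x := by
  refine ((((hasDerivAt_one_add_mul_div_rpow γ σ (1 - 2 / γ) hx).div_const
    (γ * (1 - γ) * (γ - 2))).add ((hasDerivAt_one_add_mul_div_rpow γ σ (-2 / γ) hx).div_const
      (2 * γ))).add ((hasDerivAt_one_add_mul_div_rpow γ σ (-1 / γ) hx).div_const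
        (1 - γ))).congr_deriv ?_
  rw [show (1 - 2 / γ - 1 : ℝ) = (1 - 1 / γ) + (-1 / γ - 1) by ring,
    show (-2 / γ - 1 : ℝ) = -1 / γ + (-1 / γ - 1) by ring, rpow_add hx, rpow_add hx,
    dsigmaPrimitive, gpdPdf]
  field_simp
  ring

lemma Dsigma_nonpos (hγ : 0 ≤ γ) (hσ : 0 ≤ σ) {y : ℝ} (hy : 0 ≤ y) : Dsigma γ σ y ≤ 0 := by
  rw [Dsigma]
  exact mul_nonpos_of_nonpos_of_nonneg (neg_nonpos.2 (by positivity)) (by positivity)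

lemma gpdPdf_nonneg (hγ : 0 ≤ γ) (hσ : 0 ≤ σ) {x : ℝ} (hx : 0 ≤ x) : 0 ≤ gpdPdf γ σ x := by
  rw [gpdPdf]
  positivity

lemma continuousOn_Dsigma (hγ : 0 ≤ γ) (hσ : 0 ≤ σ) : ContinuousOn (Dsigma γ σ) (Ici 0) :=
  ContinuousOn.mul (by fun_prop) <| ContinuousOn.rpow_const (by fun_prop) fun y (hy : 0 ≤ y) =>
    Or.inl (by positivity)

lemma integral_Dsigma_nonpos (hγ : 0 ≤ γ) (hσ : 0 ≤ σ) {u : ℝ} (hu : 0 ≤ u) :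
    ∫ y in (0 : ℝ)..u, Dsigma γ σ y ≤ 0 := by
  simpa using intervalIntegral.integral_nonneg hu fun y hy =>
    neg_nonneg.2 (Dsigma_nonpos hγ hσ hy.1)

lemma integral_Dsigma (hγ0 : 0 < γ) (hγ1 : γ ≠ 1) (hσ : 0 ≤ σ) {u : ℝ} (hu : 0 ≤ u) :
    ∫ y in (0 : ℝ)..u, Dsigma γ σ y = dsigmaPrimitive γ σ u := by
  rw [intervalIntegral.integral_eq_sub_of_hasDerivAt (f := dsigmaPrimitive γ σ),
    dsigmaPrimitive_zero hγ0.ne' hγ1, sub_zero]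
  · rw [uIcc_of_le hu]
    intro x hx
    exact hasDerivAt_dsigmaPrimitive hγ0.ne' hγ1 (by have := hx.1; positivity)
  · rw [intervalIntegrable_iff_integrableOn_Icc_of_le hu]
    exact ((continuousOn_Dsigma hγ0.le hσ).mono Icc_subset_Ici_self).integrableOn_Icc

lemma tendsto_dsigmaPdfPrimitive_atTop (hγ0 : 0 < γ) (hγ1 : γ < 1) (hσ : 0 < σ) :
    Tendsto (dsigmaPdfPrimitive γ σ) atTop (𝓝 0) := by
  have h1 := tendsto_one_add_mul_div_rpow_atTop (p := 1 - 2 / γ) hγ0 hσ <| by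
    rw [sub_neg, lt_div_iff₀ hγ0]; linarith
  have h2 := tendsto_one_add_mul_div_rpow_atTop (p := -2 / γ) hγ0 hσ <|
    div_neg_of_neg_of_pos (by norm_num) hγ0
  have h3 := tendsto_one_add_mul_div_rpow_atTop (p := -1 / γ) hγ0 hσ <|
    div_neg_of_neg_of_pos (by norm_num) hγ0
  unfold dsigmaPdfPrimitive
  simpa using ((h1.div_const (γ * (1 - γ) * (γ - 2))).add (h2.div_const (2 * γ))).add
    (h3.div_const (1 - γ))

end

/-- `∫₀^∞ (∫₀^u D_σ(y) dy) f_{γ,σ}(u) du = 1 / (2(γ-2))`. -/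
theorem integral_integral_Dsigma (γ : ℝ) (hγ : γ ∈ Set.Ioo (0 : ℝ) 1) (σ : ℝ) (hσ : 0 < σ) :
    ∫ u in Set.Ioi (0 : ℝ), (∫ y in (0 : ℝ)..u, Dsigma γ σ y) * gpdPdf γ σ u =
      1 / (2 * (γ - 2)) := by
  obtain ⟨hγ0, hγ1⟩ := hγ
  have hderiv : ∀ x ∈ Ici (0 : ℝ), HasDerivAt (dsigmaPdfPrimitive γ σ)
      ((∫ y in (0 : ℝ)..x, Dsigma γ σ y) * gpdPdf γ σ x) x := fun x (hx : 0 ≤ x) => by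
    rw [integral_Dsigma hγ0 hγ1.ne hσ.le hx]
    exact hasDerivAt_dsigmaPdfPrimitive hγ0.ne' (by linarith) (by positivity)
  have hnonpos : ∀ x ∈ Ioi (0 : ℝ), (∫ y in (0 : ℝ)..x, Dsigma γ σ y) * gpdPdf γ σ x ≤ 0 :=
    fun x (hx : 0 < x) => mul_nonpos_of_nonpos_of_nonneg
      (integral_Dsigma_nonpos hγ0.le hσ.le hx.le) (gpdPdf_nonneg hγ0.le hσ.le hx.le)
  rw [integral_Ioi_of_hasDerivAt_of_nonpos' hderiv hnonpos
    (tendsto_dsigmaPdfPrimitive_atTop hγ0 hγ1 hσ),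
    dsigmaPdfPrimitive_zero hγ0.ne' hγ1.ne (by linarith)]
  ring
end
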